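/- arXiv:1410.2254 — 5 statements merged into one kernel-verified Lean document; each statement's English description precedes it below -/
import Mathlib

section
/- Let f : ℝⁿ → ℝᵐ be a quadratic map with a positive-definite combination c₊ · A ≻ 0. Then the supporting hyperplane of the image 𝓕(f) = f(ℝⁿ) orthogonal to c₊ touches 𝓕(f) at exactly one point, namely f(x₀) with x₀ = A₊⁻¹(c₊·v); i.e. the minimum of c₊·y over y ∈ 𝓕(f) is attained at the unique point y₀ = f(x₀). -/
open Matrix

private lemma quadSum (n m : ℕ) (A : Fin m → Matrix (Fin n) (Fin n) ℝ)
    (cplus : Fin m → ℝ) (x : Fin n → ℝ) :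
    x ⬝ᵥ (∑ i, cplus i • A i) *ᵥ x = ∑ i, cplus i * (x ⬝ᵥ A i *ᵥ x) := by
  simp [Matrix.mulVec, dotProduct, Matrix.sum_apply, Finset.mul_sum, Finset.sum_mul]
  rw [Finset.sum_comm]
  conv_lhs => rw [show (fun (y : Fin n) => ∑ x_1 : Fin n, ∑ i : Fin m,
      x x_1 * (cplus i * A i x_1 y * x y)) = (fun y => ∑ i : Fin m, ∑ x_1 : Fin n,
      x x_1 * (cplus i * A i x_1 y * x y)) from funext fun y => Finset.sum_comm]
  rw [Finset.sum_comm]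
  refine Finset.sum_congr rfl fun i _ => ?_
  rw [Finset.sum_comm]
  exact Finset.sum_congr rfl fun j _ => Finset.sum_congr rfl fun k _ => by ring

private lemma linSum (n m : ℕ) (v : Fin m → Fin n → ℝ)
    (cplus : Fin m → ℝ) (x : Fin n → ℝ) :
    (∑ i, cplus i • v i) ⬝ᵥ x = ∑ i, cplus i * (v i ⬝ᵥ x) := by
  simp [dotProduct, Finset.sum_apply, Finset.mul_sum, Finset.sum_mul]
  rw [Finset.sum_comm]
  exact Finset.sum_congr rfl fun i _ => Finset.sum_congr rfl fun j _ => by ring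

/-- The supporting hyperplane of the image `𝓕(f) = f(ℝⁿ)` orthogonal to `c₊`
touches `𝓕(f)` at exactly one point, namely `f(x₀)` with `x₀ = A₊⁻¹ v₊`:
the minimum of `c₊ · y` over the image is attained exactly at `y₀ = f(x₀)`. -/
theorem stmt_3 (n m : ℕ)
    (A : Fin m → Matrix (Fin n) (Fin n) ℝ) (v : Fin m → Fin n → ℝ)
    (hA : ∀ i, (A i).IsSymm)
    (f : Fin m → (Fin n → ℝ) → ℝ)
    (hf : ∀ i x, f i x = x ⬝ᵥ (A i).mulVec x - 2 * (v i ⬝ᵥ x))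
    (cplus : Fin m → ℝ)
    (Aplus : Matrix (Fin n) (Fin n) ℝ) (hAp : Aplus = ∑ i, cplus i • A i)
    (hpos : Aplus.PosDef)
    (vplus : Fin n → ℝ) (hvp : vplus = ∑ i, cplus i • v i)
    (x₀ : Fin n → ℝ) (hx₀ : x₀ = Aplus⁻¹.mulVec vplus) :
    (∀ x : Fin n → ℝ, ∑ i, cplus i * f i x₀ ≤ ∑ i, cplus i * f i x)
    ∧ (∀ y ∈ Set.range (fun x : Fin n → ℝ => fun i => f i x),
        (∑ i, cplus i * y i = ∑ i, cplus i * f i x₀) → y = fun i => f i x₀) := by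
  have hsum : ∀ x : Fin n → ℝ,
      ∑ i, cplus i * f i x = x ⬝ᵥ Aplus.mulVec x - 2 * (vplus ⬝ᵥ x) := by
    intro x
    simp only [hf, hAp, hvp]
    rw [quadSum, linSum, Finset.mul_sum, ← Finset.sum_sub_distrib]
    refine Finset.sum_congr rfl fun i _ => ?_
    ring
  have hAsym : Aplusᵀ = Aplus := by
    rw [hAp, Matrix.transpose_sum]
    exact Finset.sum_congr rfl fun i _ => by rw [Matrix.transpose_smul, (hA i)]
  have hApx₀ : Aplus.mulVec x₀ = vplus := by
    rw [hx₀, Matrix.mulVec_mulVec, Matrix.mul_nonsing_inv _ hpos.det_pos.ne'.isUnit,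
      Matrix.one_mulVec]
  have hkey : ∀ x : Fin n → ℝ,
      (∑ i, cplus i * f i x) - (∑ i, cplus i * f i x₀)
        = (x - x₀) ⬝ᵥ Aplus.mulVec (x - x₀) := by
    intro x
    rw [hsum, hsum]
    have hcomm : x ⬝ᵥ Aplus.mulVec x₀ = x₀ ⬝ᵥ Aplus.mulVec x := by
      rw [dotProduct_mulVec, ← Matrix.mulVec_transpose, hAsym, dotProduct_comm]
    rw [sub_dotProduct, Matrix.mulVec_sub, dotProduct_sub, dotProduct_sub]
    have h1 : vplus ⬝ᵥ x = x₀ ⬝ᵥ Aplus.mulVec x := by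
      rw [← hApx₀, dotProduct_mulVec, ← Matrix.mulVec_transpose, hAsym, dotProduct_comm]
    have h2 : vplus ⬝ᵥ x₀ = x₀ ⬝ᵥ Aplus.mulVec x₀ := by
      rw [← hApx₀, dotProduct_mulVec, ← Matrix.mulVec_transpose, hAsym, dotProduct_comm]
    rw [h1, h2, hcomm]
    ring
  have hnn : ∀ d : Fin n → ℝ, 0 ≤ d ⬝ᵥ Aplus.mulVec d := by
    intro d
    rcases eq_or_ne d 0 with h | h
    · simp [h]
    · have := hpos.dotProduct_mulVec_pos h
      simpa using this.le
  refine ⟨fun x => ?_, fun y hy heq => ?_⟩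
  · have := hnn (x - x₀)
    linarith [hkey x, this]
  · obtain ⟨x, rfl⟩ := hy
    have h0 : (∑ i, cplus i * f i x) - (∑ i, cplus i * f i x₀) = 0 := by
      simpa using sub_eq_zero_of_eq heq
    rw [hkey x] at h0
    have hd : x - x₀ = 0 := by
      by_contra h
      have hlt := hpos.dotProduct_mulVec_pos h
      rw [show star (x - x₀) = x - x₀ from rfl] at hlt
      exact absurd h0 (ne_of_gt hlt)
    have : x = x₀ := by rwa [sub_eq_zero] at hd
    subst this
    rfl
end

section
/- Let A be an n×n real symmetric matrix, A₊ ≻ 0, and v ∈ ℝⁿ. Suppose A ⪰ 0 (in the generalized sense relative to A₊, i.e. λ⁺_min(A) = 0) and A is singular. If the equation A x = v has a solution, then the limit as ε → 0⁺ of |(A + ε·A₊)⁻¹ v|²₊ exists and is finite, and equals min{|x|²₊ : A x = v}; if A x = v has no solution, the limit is +∞. -/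
open Matrix Filter

private lemma stmt9_mulVec_eq_iff {n : ℕ} {G G' : Matrix (Fin n) (Fin n) ℝ}
    (h : G' * G = 1) (h2 : G * G' = 1) (a b : Fin n → ℝ) :
    G *ᵥ a = b ↔ a = G' *ᵥ b := by
  constructor
  · rintro rfl; rw [mulVec_mulVec, h, one_mulVec]
  · rintro rfl; rw [mulVec_mulVec, h2, one_mulVec]

private lemma stmt9_dot_orth {n : ℕ} {G : Matrix (Fin n) (Fin n) ℝ}
    (h : Gᵀ * G = 1) (a : Fin n → ℝ) : (G *ᵥ a) ⬝ᵥ (G *ᵥ a) = a ⬝ᵥ a := by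
  rw [dotProduct_mulVec, ← mulVec_transpose, mulVec_mulVec, h, one_mulVec]

set_option maxHeartbeats 1000000 in
private lemma stmt9_sandwich {n : ℕ} (S X Y S' : Matrix (Fin n) (Fin n) ℝ)
    (h1 : S * S' = 1) (hXY : X * Y = 1) : (S * X * S) * (S' * Y * S') = 1 := by
  calc (S * X * S) * (S' * Y * S') = S * (X * ((S * S') * (Y * S'))) := by
        simp only [Matrix.mul_assoc]
    _ = S * (X * Y * S') := by rw [h1, Matrix.one_mul, ← Matrix.mul_assoc X Y S']
    _ = 1 := by rw [hXY, Matrix.one_mul, h1]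

/-- For `A ⪰ 0` singular and `A₊ ≻ 0`: if `A x = v` is solvable, then
`|(A + εA₊)⁻¹ v|²₊` tends, as `ε → 0⁺`, to `min {|x|²₊ : A x = v}`;
if `A x = v` has no solution, the limit is `+∞`. -/
theorem stmt_9 (n : ℕ)
    (A Aplus : Matrix (Fin n) (Fin n) ℝ)
    (hA : A.IsSymm) (hApos : A.PosSemidef) (hAplus : Aplus.PosDef)
    (hsing : ¬ IsUnit A.det)
    (v : Fin n → ℝ)
    (φ : ℝ → ℝ)
    (hφ : ∀ ε : ℝ, φ ε =
      (A + ε • Aplus)⁻¹.mulVec v ⬝ᵥ Aplus.mulVec ((A + ε • Aplus)⁻¹.mulVec v)) :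
    ((∃ x, A.mulVec x = v) →
      ∃ L : ℝ, IsLeast {z : ℝ | ∃ x, A.mulVec x = v ∧ z = x ⬝ᵥ Aplus.mulVec x} L ∧
        Filter.Tendsto φ (nhdsWithin 0 (Set.Ioi 0)) (nhds L))
    ∧ ((¬ ∃ x, A.mulVec x = v) →
      Filter.Tendsto φ (nhdsWithin 0 (Set.Ioi 0)) Filter.atTop) := by
  classical
  set S : Matrix (Fin n) (Fin n) ℝ := (open scoped MatrixOrder in CFC.sqrt Aplus) with hSdef
  have hSpsd : S.PosSemidef := (open scoped MatrixOrder in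
    Matrix.nonneg_iff_posSemidef.mp (CFC.sqrt_nonneg Aplus))
  have hSh : Sᴴ = S := hSpsd.1
  have hSS_eq : S * S = Aplus := (open scoped MatrixOrder in
    CFC.sqrt_mul_sqrt_self Aplus hAplus.posSemidef.nonneg)
  have hSdet : IsUnit S.det := by
    have h1 : S.det * S.det = Aplus.det := by rw [← det_mul, hSS_eq]
    have h2 : (0:ℝ) < Aplus.det := hAplus.det_pos
    have : S.det ≠ 0 := by intro h; rw [h, mul_zero] at h1; linarith
    exact this.isUnit
  have hSS : S * S⁻¹ = 1 := mul_nonsing_inv S hSdet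
  have hS'S : S⁻¹ * S = 1 := nonsing_inv_mul S hSdet
  have hSinvh : S⁻¹ᴴ = S⁻¹ := hSpsd.1.inv
  set M : Matrix (Fin n) (Fin n) ℝ := S⁻¹ * A * S⁻¹ with hMdef
  have hMpsd : M.PosSemidef := by
    have := hApos.mul_mul_conjTranspose_same S⁻¹
    rwa [hSinvh] at this
  have hM : M.IsHermitian := hMpsd.1
  set U : Matrix (Fin n) (Fin n) ℝ := (hM.eigenvectorUnitary : Matrix (Fin n) (Fin n) ℝ)
    with hUdef
  set lam : Fin n → ℝ := hM.eigenvalues with hlamdef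
  have hUU : star U * U = 1 := Unitary.coe_star_mul_self hM.eigenvectorUnitary
  have hUU' : U * star U = 1 := Unitary.coe_mul_star_self hM.eigenvectorUnitary
  have hstarU : star U = Uᵀ := U.conjTranspose_eq_transpose_of_trivial
  have hspec : M = U * diagonal lam * star U := by simpa using hM.spectral_theorem
  have hlam_nonneg : ∀ i, 0 ≤ lam i := hMpsd.eigenvalues_nonneg
  set w : Fin n → ℝ := S⁻¹ *ᵥ v with hwdef
  set c : Fin n → ℝ := star U *ᵥ w with hcdef
  -- A = S * M * S
  have hSMS : S * M * S = A := by
    rw [hMdef]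
    simp only [Matrix.mul_assoc]
    rw [hS'S, Matrix.mul_one, ← Matrix.mul_assoc, hSS, Matrix.one_mul]
  -- key1 : solution characterization
  have key1 : ∀ x : Fin n → ℝ, A *ᵥ x = v ↔
      (∀ i, lam i * (star U *ᵥ (S *ᵥ x)) i = c i) := by
    intro x
    have hArw : A *ᵥ x = S *ᵥ (U *ᵥ (diagonal lam *ᵥ (star U *ᵥ (S *ᵥ x)))) := by
      conv_lhs => rw [← hSMS, hspec]
      simp only [← mulVec_mulVec, Matrix.mul_assoc]
    rw [hArw, stmt9_mulVec_eq_iff hS'S hSS, ← hwdef,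
      stmt9_mulVec_eq_iff hUU hUU', ← hcdef]
    constructor
    · intro h i
      rw [← h, mulVec_diagonal]
    · intro h
      funext i
      rw [mulVec_diagonal, h i]
  -- key2 : quadratic form
  have key2 : ∀ x : Fin n → ℝ, x ⬝ᵥ Aplus *ᵥ x = ∑ i, ((star U *ᵥ (S *ᵥ x)) i)^2 := by
    intro x
    have hSt : Sᵀ = S := by rw [← S.conjTranspose_eq_transpose_of_trivial, hSh]
    have h1 : x ⬝ᵥ Aplus *ᵥ x = (S *ᵥ x) ⬝ᵥ (S *ᵥ x) := by
      rw [← hSS_eq, ← mulVec_mulVec, dotProduct_mulVec, ← mulVec_transpose, hSt]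
    have h2 : (star U *ᵥ (S *ᵥ x)) ⬝ᵥ (star U *ᵥ (S *ᵥ x)) = (S *ᵥ x) ⬝ᵥ (S *ᵥ x) := by
      apply stmt9_dot_orth
      rw [hstarU, transpose_transpose, ← hstarU, hUU']
    rw [h1, ← h2, dotProduct]
    exact Finset.sum_congr rfl fun i _ => (pow_two _).symm
  -- surjectivity of d ↦ x
  have key3 : ∀ d : Fin n → ℝ, star U *ᵥ (S *ᵥ (S⁻¹ *ᵥ (U *ᵥ d))) = d := by
    intro d
    simp only [mulVec_mulVec]
    rw [← Matrix.mul_assoc S S⁻¹ U, hSS, Matrix.one_mul, hUU, one_mulVec]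
  -- φ formula for ε > 0
  have hφsum : ∀ ε : ℝ, 0 < ε → φ ε = ∑ i, (c i)^2 / (lam i + ε)^2 := by
    intro ε hε
    have hd0 : ∀ i, lam i + ε ≠ 0 := fun i =>
      (by have := hlam_nonneg i; linarith : (0:ℝ) < lam i + ε).ne'
    -- B = A + ε • Aplus = S * (U * Dε * star U) * S
    have hB : A + ε • Aplus = S * (U * diagonal (fun i => lam i + ε) * star U) * S := by
      have hdiag : diagonal (fun i => lam i + ε) = diagonal lam + ε • (1 : Matrix (Fin n) (Fin n) ℝ) := by
        ext i j
        by_cases h : i = j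
        · subst h; simp [Matrix.one_apply]
        · simp [diagonal_apply_ne _ h, Matrix.one_apply_ne h]
      rw [hdiag, Matrix.mul_add, Matrix.add_mul, Matrix.mul_add, Matrix.add_mul,
        ← hspec, hSMS]
      congr 1
      simp only [Matrix.mul_smul, Matrix.smul_mul, Matrix.mul_one, Matrix.one_mul,
        hUU', hSS_eq]
    have hXY : (U * diagonal (fun i => lam i + ε) * star U) *
        (U * diagonal (fun i => (lam i + ε)⁻¹) * star U) = 1 := by
      simp only [Matrix.mul_assoc]
      rw [← Matrix.mul_assoc (star U) U, hUU, Matrix.one_mul,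
        ← Matrix.mul_assoc (diagonal _) (diagonal _), diagonal_mul_diagonal]
      have : (fun i => (lam i + ε) * (lam i + ε)⁻¹) = fun _ => (1:ℝ) := by
        funext i; exact mul_inv_cancel₀ (hd0 i)
      rw [this, diagonal_one, Matrix.one_mul, hUU']
    have hinv : (A + ε • Aplus)⁻¹ =
        S⁻¹ * (U * diagonal (fun i => (lam i + ε)⁻¹) * star U) * S⁻¹ := by
      apply inv_eq_right_inv
      rw [hB]
      exact stmt9_sandwich _ _ _ _ hSS hXY
    set d : Fin n → ℝ := fun i => (lam i + ε)⁻¹ * c i with hddef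
    have hc' : star U *ᵥ (S⁻¹ *ᵥ v) = c := rfl
    have hdd : diagonal (fun i => (lam i + ε)⁻¹) *ᵥ c = d := by
      funext i
      rw [mulVec_diagonal]
    have hu : (A + ε • Aplus)⁻¹ *ᵥ v = S⁻¹ *ᵥ (U *ᵥ d) := by
      rw [hinv]
      simp only [← mulVec_mulVec]
      rw [hc', hdd]
    have hdot : (S⁻¹ *ᵥ (U *ᵥ d)) ⬝ᵥ Aplus *ᵥ (S⁻¹ *ᵥ (U *ᵥ d)) = d ⬝ᵥ d := by
      rw [key2, key3, dotProduct]
      exact Finset.sum_congr rfl fun i _ => pow_two _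
    rw [hφ, hu, hdot, dotProduct]
    apply Finset.sum_congr rfl
    intro i _
    rw [hddef]
    field_simp
  constructor
  · -- solvable case
    rintro ⟨x0, hx0⟩
    have hc0 : ∀ i, lam i = 0 → c i = 0 := by
      intro i hi
      have := (key1 x0).mp hx0 i
      rw [hi, zero_mul] at this
      exact this.symm
    set L : ℝ := ∑ i, (c i / lam i)^2 with hLdef
    refine ⟨L, ⟨?_, ?_⟩, ?_⟩
    · -- membership
      set dstar : Fin n → ℝ := fun i => c i / lam i with hdstar
      refine ⟨S⁻¹ *ᵥ (U *ᵥ dstar), ?_, ?_⟩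
      · rw [key1]
        intro i
        rw [key3]
        by_cases hi : lam i = 0
        · simp [hdstar, hi, hc0 i hi]
        · exact mul_div_cancel₀ _ hi
      · rw [key2, key3]
    · -- lower bound
      rintro z ⟨x, hx, rfl⟩
      rw [key2]
      set d : Fin n → ℝ := star U *ᵥ (S *ᵥ x) with hd
      have hsol := (key1 x).mp hx
      apply Finset.sum_le_sum
      intro i _
      by_cases hi : lam i = 0
      · rw [hi, div_zero]
        simpa using sq_nonneg (d i)
      · have : d i = c i / lam i := by
          rw [eq_div_iff hi, mul_comm]
          exact hsol i
        rw [← this]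
    · -- tendsto
      have hcong : ∀ᶠ ε in nhdsWithin 0 (Set.Ioi 0),
          φ ε = ∑ i, (c i)^2 / (lam i + ε)^2 := by
        filter_upwards [self_mem_nhdsWithin] with ε hε
        exact hφsum ε hε
      rw [Filter.tendsto_congr' hcong, hLdef]
      have : ∀ i : Fin n, Filter.Tendsto (fun ε => (c i)^2 / (lam i + ε)^2)
          (nhdsWithin 0 (Set.Ioi 0)) (nhds ((c i / lam i)^2)) := by
        intro i
        by_cases hi : lam i = 0
        · have hci := hc0 i hi
          have hfn : (fun ε : ℝ => (c i)^2 / (lam i + ε)^2) = fun _ => (0:ℝ) := by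
            funext ε
            rw [hci]
            simp
          rw [hfn, hci]
          simpa using tendsto_const_nhds
        · have hlpos : 0 < lam i := lt_of_le_of_ne (hlam_nonneg i) (Ne.symm hi)
          have h1 : Filter.Tendsto (fun ε : ℝ => lam i + ε)
              (nhdsWithin 0 (Set.Ioi 0)) (nhds (lam i)) := by
            have : Filter.Tendsto (fun ε : ℝ => ε) (nhdsWithin 0 (Set.Ioi 0)) (nhds 0) :=
              tendsto_id.mono_left nhdsWithin_le_nhds
            simpa using tendsto_const_nhds.add this
          have h2 := (h1.pow 2)
          have h3 := Filter.Tendsto.div (tendsto_const_nhds (x := (c i)^2)) h2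
            (pow_ne_zero 2 hi)
          rw [div_pow]
          exact h3
      exact tendsto_finset_sum _ (fun i _ => this i)
  · -- unsolvable case
    intro hns
    have : ∃ i, lam i = 0 ∧ c i ≠ 0 := by
      by_contra h
      push_neg at h
      apply hns
      set dstar : Fin n → ℝ := fun i => c i / lam i with hdstar
      refine ⟨S⁻¹ *ᵥ (U *ᵥ dstar), ?_⟩
      rw [key1]
      intro i
      rw [key3]
      by_cases hi : lam i = 0
      · simp [hdstar, hi, h i hi]
      · exact mul_div_cancel₀ _ hi
    obtain ⟨i0, hi0, hci0⟩ := this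
    have hbound : ∀ᶠ ε in nhdsWithin 0 (Set.Ioi 0), (c i0)^2 / ε^2 ≤ φ ε := by
      filter_upwards [self_mem_nhdsWithin] with ε hε
      rw [hφsum ε hε]
      have : (c i0)^2 / (lam i0 + ε)^2 = (c i0)^2 / ε^2 := by rw [hi0, zero_add]
      rw [← this]
      apply Finset.single_le_sum (f := fun i => (c i)^2 / (lam i + ε)^2)
        (fun i _ => by positivity) (Finset.mem_univ i0)
    have hgrow : Filter.Tendsto (fun ε : ℝ => (c i0)^2 / ε^2)
        (nhdsWithin 0 (Set.Ioi 0)) Filter.atTop := by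
      have h1 : Filter.Tendsto (fun ε : ℝ => ε⁻¹) (nhdsWithin 0 (Set.Ioi 0)) atTop :=
        tendsto_inv_nhdsGT_zero
      have h2 : Filter.Tendsto (fun ε : ℝ => (ε⁻¹)^2) (nhdsWithin 0 (Set.Ioi 0)) atTop :=
        (tendsto_pow_atTop two_ne_zero).comp h1
      have h3 := h2.const_mul_atTop (show (0:ℝ) < (c i0)^2 by positivity)
      refine h3.congr fun ε => ?_
      rw [div_eq_mul_inv, inv_pow]
    exact tendsto_atTop_mono' _ hbound hgrow
end

section
/- Hausdorff–Toeplitz theorem (joint numerical range version): for two hermitian n×n complex matrices 𝒜₁, 𝒜₂ with n ≥ 1, the set 𝓕 = {(x*𝒜₁x, x*𝒜₂x) ∈ ℝ² : x ∈ ℂⁿ, |x| = 1} is convex. -/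
open Matrix
noncomputable def QF {n : ℕ} (M : Matrix (Fin n) (Fin n) ℂ) (x : Fin n → ℂ) : ℝ :=
  (star x ⬝ᵥ M.mulVec x).re

variable {n : ℕ}

lemma herm_conj {M : Matrix (Fin n) (Fin n) ℂ} (hM : M.IsHermitian) (x y : Fin n → ℂ) :
    star y ⬝ᵥ M.mulVec x = star (star x ⬝ᵥ M.mulVec y) := by
  rw [star_dotProduct]
  congr 1
  rw [star_mulVec, dotProduct_mulVec, hM.eq]

lemma cross_smul (M : Matrix (Fin n) (Fin n) ℂ) (u : ℂ) (x y : Fin n → ℂ) :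
    star (u • x) ⬝ᵥ M.mulVec y = star u * (star x ⬝ᵥ M.mulVec y) := by
  simp [star_smul, smul_dotProduct, smul_eq_mul]

lemma self_smul (M : Matrix (Fin n) (Fin n) ℂ) (u : ℂ) (x : Fin n → ℂ) :
    star (u • x) ⬝ᵥ M.mulVec (u • x) = (star u * u) * (star x ⬝ᵥ M.mulVec x) := by
  simp [star_smul, smul_dotProduct, mulVec_smul, dotProduct_smul, smul_eq_mul]
  ring

lemma QF_expand {M : Matrix (Fin n) (Fin n) ℂ} (hM : M.IsHermitian) (x y : Fin n → ℂ)
    (c s : ℝ) :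
    QF M ((c:ℂ) • x + (s:ℂ) • y) =
      c^2 * QF M x + s^2 * QF M y + 2*c*s*(star x ⬝ᵥ M.mulVec y).re := by
  unfold QF
  rw [mulVec_add, mulVec_smul, mulVec_smul, star_add, star_smul, star_smul]
  simp only [add_dotProduct, dotProduct_add, smul_dotProduct, dotProduct_smul,
    smul_eq_mul, star_trivial, Complex.star_def, Complex.conj_ofReal]
  rw [herm_conj hM x y]
  simp [Complex.add_re, Complex.mul_re, Complex.ofReal_re, Complex.ofReal_im]
  ring

lemma self_dot_re (z : Fin n → ℂ) :
    star z ⬝ᵥ z = ((star z ⬝ᵥ z).re : ℂ) := by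
  have h : star z ⬝ᵥ z = star (star z ⬝ᵥ z) := star_dotProduct z z
  exact (Complex.conj_eq_iff_re.mp h.symm).symm

lemma self_dot_re_eq (z : Fin n → ℂ) :
    (star z ⬝ᵥ z).re = ∑ i, Complex.normSq (z i) := by
  simp only [dotProduct, Complex.re_sum, Pi.star_apply]
  refine Finset.sum_congr rfl fun i _ => ?_
  rw [Complex.star_def, ← Complex.normSq_eq_conj_mul_self, Complex.ofReal_re]

lemma self_dot_pos {z : Fin n → ℂ} (hz : z ≠ 0) : 0 < (star z ⬝ᵥ z).re := by
  rw [self_dot_re_eq]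
  have h1 : ∀ i ∈ Finset.univ, (0:ℝ) ≤ Complex.normSq (z i) := fun i _ => Complex.normSq_nonneg _
  obtain ⟨i, hi⟩ : ∃ i, z i ≠ 0 := by
    by_contra h; push_neg at h; exact hz (funext h)
  exact Finset.sum_pos' h1 ⟨i, Finset.mem_univ i, Complex.normSq_pos.mpr hi⟩

lemma QF_one (z : Fin n → ℂ) : QF 1 z = (star z ⬝ᵥ z).re := by
  unfold QF; rw [one_mulVec]

lemma QF_real_smul (M : Matrix (Fin n) (Fin n) ℂ) (c : ℝ) (x : Fin n → ℂ) :
    QF M ((c:ℂ) • x) = c^2 * QF M x := by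
  unfold QF
  rw [self_smul, Complex.star_def, Complex.conj_ofReal, ← Complex.ofReal_mul,
    Complex.re_ofReal_mul]
  ring

lemma core {H K : Matrix (Fin n) (Fin n) ℂ} (hH : H.IsHermitian) (hK : K.IsHermitian)
    {x y : Fin n → ℂ} (hx : star x ⬝ᵥ x = 1) (hy : star y ⬝ᵥ y = 1)
    {e : ℝ} (he : 0 < e)
    (hHx : QF H x = 0) (hHy : QF H y = e) (hKx : QF K x = 0) (hKy : QF K y = 0)
    {t : ℝ} (ht0 : 0 ≤ t) (ht1 : t ≤ e) :
    ∃ z, star z ⬝ᵥ z = 1 ∧ QF H z = t ∧ QF K z = 0 := by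
  set β : ℂ := star x ⬝ᵥ K.mulVec y with hβ
  set u : ℂ := if β = 0 then 1 else Complex.I * β / ‖β‖ with hu
  have hnu : ‖u‖ = 1 := by
    rw [hu]
    by_cases h : β = 0
    · rw [if_pos h]; simp
    · rw [if_neg h, norm_div, norm_mul, Complex.norm_I, one_mul, Complex.norm_real,
        norm_norm]
      exact div_self (norm_ne_zero_iff.mpr h)
  have huu : star u * u = 1 := by
    rw [Complex.star_def, ← Complex.normSq_eq_conj_mul_self, Complex.normSq_eq_norm_sq,
      hnu]
    norm_num
  have hub : (star u * β).re = 0 := by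
    by_cases h : β = 0
    · simp [h]
    · have e1 : star u = -Complex.I * (starRingEnd ℂ) β / ((‖β‖:ℝ):ℂ) := by
        rw [hu, if_neg h, Complex.star_def, map_div₀, map_mul (starRingEnd ℂ),
          Complex.conj_I, Complex.conj_ofReal]
      have e2 : star u * β = ((Complex.normSq β / ‖β‖ : ℝ) : ℂ) * -Complex.I := by
        rw [e1, div_mul_eq_mul_div, mul_assoc, ← Complex.normSq_eq_conj_mul_self]
        push_cast
        ring
      rw [e2, Complex.re_ofReal_mul]
      simp
  set x' : Fin n → ℂ := u • x with hx'
  have hx'x' : star x' ⬝ᵥ x' = 1 := by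
    rw [hx']
    have e := self_smul (1 : Matrix (Fin n) (Fin n) ℂ) u x
    simp only [one_mulVec] at e
    rw [e, huu, hx, one_mul]
  have hHx' : QF H x' = 0 := by
    unfold QF; rw [hx', self_smul, huu, one_mul]; exact hHx
  have hKx' : QF K x' = 0 := by
    unfold QF; rw [hx', self_smul, huu, one_mul]; exact hKx
  have hcrossK : (star x' ⬝ᵥ K.mulVec y).re = 0 := by
    rw [hx', cross_smul, ← hβ]; exact hub
  have hzne : ∀ c s : ℝ, (c ≠ 0 ∨ s ≠ 0) → (c:ℂ) • x' + (s:ℂ) • y ≠ 0 := by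
    intro c s hcs habs
    by_cases hc : c = 0
    · subst hc
      rcases hcs with h | h
      · exact h rfl
      · simp only [Complex.ofReal_zero, zero_smul, zero_add] at habs
        have hs : (s:ℂ) ≠ 0 := by exact_mod_cast h
        have : y = 0 := (smul_eq_zero.mp habs).resolve_left hs
        rw [this] at hy; simp at hy
    · have hcC : (c:ℂ) ≠ 0 := by exact_mod_cast hc
      have h0 : (c:ℂ) • x' = -((s:ℂ) • y) := by
        rw [← add_eq_zero_iff_eq_neg]; exact habs
      have h0' : x' = (((c:ℂ))⁻¹ * (s:ℂ)) • (-y) := by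
        have := congrArg (fun v => (c:ℂ)⁻¹ • v) h0
        simp only [smul_smul, inv_mul_cancel₀ hcC, one_smul, smul_neg] at this
        rw [this, smul_neg]
      have hco : ((-(s/c) : ℝ) : ℂ) • y = (((c:ℂ))⁻¹ * (s:ℂ)) • (-y) := by
        rw [smul_neg, ← neg_smul]
        congr 1
        push_cast
        rw [div_eq_inv_mul]
      have hxeq : x' = ((-(s/c) : ℝ) : ℂ) • y := by rw [h0', ← hco]
      have h1 : QF H x' = (-(s/c))^2 * QF H y := by
        rw [hxeq]; exact QF_real_smul H (-(s/c)) y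
      rw [hHx', hHy] at h1
      have hsc : s / c = 0 := by
        have h2 : (-(s/c))^2 = 0 := by
          rcases mul_eq_zero.mp h1.symm with h2 | h2
          · exact h2
          · exact absurd h2 he.ne'
        have := pow_eq_zero_iff (two_ne_zero) |>.mp h2
        linarith [neg_eq_zero.mp this]
      rw [hsc] at hxeq
      simp only [neg_zero, Complex.ofReal_zero, zero_smul] at hxeq
      rw [hxeq] at hx'x'; simp at hx'x'
  set d : ℝ := (star x' ⬝ᵥ H.mulVec y).re with hd
  set r : ℝ := (star x' ⬝ᵥ y).re with hr
  set N : ℝ → ℝ := fun s => (1-s)^2 + s^2 + 2*(1-s)*s*r with hN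
  have hQ1 : ∀ s : ℝ, QF 1 (((1-s : ℝ):ℂ) • x' + ((s:ℝ):ℂ) • y) = N s := by
    intro s
    rw [QF_expand isHermitian_one x' y (1-s) s, QF_one, QF_one, hx'x', hy]
    simp only [Complex.one_re, one_mulVec, hN, ← hr]
    ring
  have hNpos' : ∀ s ∈ Set.Icc (0:ℝ) 1, 0 < N s := by
    intro s _
    rw [← hQ1 s, QF_one]
    apply self_dot_pos
    apply hzne
    by_cases h : s = 0
    · left; rw [h]; norm_num
    · right; exact h
  set g : ℝ → ℝ := fun s => (s^2*e + 2*(1-s)*s*d) / N s with hg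
  have hgc : ContinuousOn g (Set.Icc 0 1) := by
    simp only [hg]
    apply ContinuousOn.div
    · fun_prop
    · simp only [hN]; fun_prop
    · intro s hs; exact (hNpos' s hs).ne'
  have hg0 : g 0 = 0 := by simp [hg, hN]
  have hg1 : g 1 = e := by simp [hg, hN]
  have hmem : t ∈ Set.Icc (g 0) (g 1) := by rw [hg0, hg1]; exact ⟨ht0, ht1⟩
  obtain ⟨s, hs01, hst⟩ := intermediate_value_Icc (by norm_num : (0:ℝ) ≤ 1) hgc hmem
  set z : Fin n → ℂ := ((1-s : ℝ):ℂ) • x' + ((s:ℝ):ℂ) • y with hz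
  have hQHz : QF H z = s^2*e + 2*(1-s)*s*d := by
    rw [hz, QF_expand hH, hHx', hHy, ← hd]; ring
  have hQKz : QF K z = 0 := by
    rw [hz, QF_expand hK, hKx', hKy, hcrossK]; ring
  have hNz : (star z ⬝ᵥ z).re = N s := by rw [← QF_one, hz, hQ1 s]
  have hNspos : 0 < N s := hNpos' s hs01
  set w : Fin n → ℂ := (((Real.sqrt (N s))⁻¹ : ℝ) : ℂ) • z with hw
  have hsq : ((Real.sqrt (N s))⁻¹:ℝ)^2 = (N s)⁻¹ := by
    rw [← Real.sqrt_inv]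
    exact Real.sq_sqrt (by positivity)
  have hrrN : ((Real.sqrt (N s))⁻¹:ℝ) * (Real.sqrt (N s))⁻¹ * N s = 1 := by
    rw [← pow_two, hsq]
    exact inv_mul_cancel₀ hNspos.ne'
  refine ⟨w, ?_, ?_, ?_⟩
  · have e := self_smul (1 : Matrix (Fin n) (Fin n) ℂ) ((((Real.sqrt (N s))⁻¹ : ℝ)) : ℂ) z
    simp only [one_mulVec] at e
    rw [hw, e, self_dot_re z, hNz, Complex.star_def, Complex.conj_ofReal,
      ← Complex.ofReal_mul, ← Complex.ofReal_mul, hrrN, Complex.ofReal_one]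
  · rw [hw, QF_real_smul, hsq, hQHz]
    simp only [hg] at hst
    rw [inv_mul_eq_div]
    exact hst
  · rw [hw, QF_real_smul, hQKz, mul_zero]

lemma herm_combo {A₁ A₂ : Matrix (Fin n) (Fin n) ℂ} (h₁ : A₁.IsHermitian)
    (h₂ : A₂.IsHermitian) (a b c : ℝ) :
    ((a:ℂ) • A₁ + (b:ℂ) • A₂ + (c:ℂ) • (1 : Matrix (Fin n) (Fin n) ℂ)).IsHermitian := by
  have hs : ∀ (r : ℝ) (M : Matrix (Fin n) (Fin n) ℂ), M.IsHermitian →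
      ((r:ℂ) • M).IsHermitian := by
    intro r M hM
    unfold Matrix.IsHermitian at *
    rw [conjTranspose_smul, Complex.star_def, Complex.conj_ofReal, hM]
  exact ((hs a A₁ h₁).add (hs b A₂ h₂)).add (hs c _ isHermitian_one)

lemma QF_combo (A₁ A₂ : Matrix (Fin n) (Fin n) ℂ) (a b c : ℝ) (z : Fin n → ℂ)
    (hz : star z ⬝ᵥ z = 1) :
    QF ((a:ℂ) • A₁ + (b:ℂ) • A₂ + (c:ℂ) • (1 : Matrix (Fin n) (Fin n) ℂ)) z =
      a * QF A₁ z + b * QF A₂ z + c := by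
  unfold QF
  rw [add_mulVec, add_mulVec, smul_mulVec, smul_mulVec, smul_mulVec,
    one_mulVec, dotProduct_add, dotProduct_add, dotProduct_smul, dotProduct_smul,
    dotProduct_smul, hz, smul_eq_mul, smul_eq_mul, smul_eq_mul, mul_one]
  simp [Complex.add_re, Complex.re_ofReal_mul]

/-- Hausdorff–Toeplitz theorem: the joint numerical range
`{(x*𝒜₁x, x*𝒜₂x) : x ∈ ℂⁿ, |x| = 1}` of two hermitian matrices is convex. -/
theorem stmt_15 (n : ℕ) (hn : 1 ≤ n)
    (A₁ A₂ : Matrix (Fin n) (Fin n) ℂ)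
    (hA₁ : A₁.IsHermitian) (hA₂ : A₂.IsHermitian) :
    Convex ℝ {p : ℝ × ℝ | ∃ x : Fin n → ℂ, star x ⬝ᵥ x = 1 ∧
      p = ((star x ⬝ᵥ A₁.mulVec x).re, (star x ⬝ᵥ A₂.mulVec x).re)} := by
  rintro p ⟨x, hx, rfl⟩ q ⟨y, hy, rfl⟩ a b ha hb hab
  simp only [Set.mem_setOf_eq, Prod.smul_mk, smul_eq_mul, Prod.mk_add_mk]
  set p₁ := (star x ⬝ᵥ A₁.mulVec x).re with hp₁
  set p₂ := (star x ⬝ᵥ A₂.mulVec x).re with hp₂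
  set q₁ := (star y ⬝ᵥ A₁.mulVec y).re with hq₁
  set q₂ := (star y ⬝ᵥ A₂.mulVec y).re with hq₂
  by_cases hpq : q₁ = p₁ ∧ q₂ = p₂
  · refine ⟨x, hx, ?_⟩
    rw [hpq.1, hpq.2]
    simp only [Prod.mk.injEq, ← hp₁, ← hp₂]
    exact ⟨by linear_combination p₁ * hab, by linear_combination p₂ * hab⟩
  · set v₁ := q₁ - p₁ with hv₁
    set v₂ := q₂ - p₂ with hv₂
    set vsq := v₁^2 + v₂^2 with hvsq
    have hvpos : 0 < vsq := by
      rcases not_and_or.mp hpq with h | h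
      · have : v₁ ≠ 0 := fun hh => h (by rw [hv₁] at hh; linarith)
        have h2 : 0 < v₁^2 := lt_of_le_of_ne (sq_nonneg _) (Ne.symm (pow_ne_zero 2 this))
        nlinarith [sq_nonneg v₂]
      · have : v₂ ≠ 0 := fun hh => h (by rw [hv₂] at hh; linarith)
        have h2 : 0 < v₂^2 := lt_of_le_of_ne (sq_nonneg _) (Ne.symm (pow_ne_zero 2 this))
        nlinarith [sq_nonneg v₁]
    set H := ((v₁:ℂ)) • A₁ + ((v₂:ℂ)) • A₂ +
      (((-(v₁*p₁+v₂*p₂) : ℝ)):ℂ) • (1 : Matrix (Fin n) (Fin n) ℂ) with hH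
    set K := (((-v₂ : ℝ)):ℂ) • A₁ + ((v₁:ℂ)) • A₂ +
      (((-(-v₂*p₁+v₁*p₂) : ℝ)):ℂ) • (1 : Matrix (Fin n) (Fin n) ℂ) with hK
    have hHh : H.IsHermitian := herm_combo hA₁ hA₂ _ _ _
    have hKh : K.IsHermitian := herm_combo hA₁ hA₂ _ _ _
    have hQ1x : QF A₁ x = p₁ := rfl
    have hQ2x : QF A₂ x = p₂ := rfl
    have hQ1y : QF A₁ y = q₁ := rfl
    have hQ2y : QF A₂ y = q₂ := rfl
    have hHx : QF H x = 0 := by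
      rw [hH, QF_combo _ _ _ _ _ _ hx, hQ1x, hQ2x]; ring
    have hHy : QF H y = vsq := by
      rw [hH, QF_combo _ _ _ _ _ _ hy, hQ1y, hQ2y, hvsq, hv₁, hv₂]; ring
    have hKx : QF K x = 0 := by
      rw [hK, QF_combo _ _ _ _ _ _ hx, hQ1x, hQ2x]; ring
    have hKy : QF K y = 0 := by
      rw [hK, QF_combo _ _ _ _ _ _ hy, hQ1y, hQ2y, hv₁, hv₂]; ring
    have ht0 : 0 ≤ b * vsq := mul_nonneg hb hvpos.le
    have ht1 : b * vsq ≤ vsq := by nlinarith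
    obtain ⟨z, hz, hHz, hKz⟩ := core hHh hKh hx hy hvpos hHx hHy hKx hKy ht0 ht1
    refine ⟨z, hz, ?_⟩
    rw [hH, QF_combo _ _ _ _ _ _ hz] at hHz
    rw [hK, QF_combo _ _ _ _ _ _ hz] at hKz
    have e1 : QF A₁ z = (star z ⬝ᵥ A₁.mulVec z).re := rfl
    have e2 : QF A₂ z = (star z ⬝ᵥ A₂.mulVec z).re := rfl
    rw [e1, e2] at hHz hKz
    rw [hvsq, hv₁, hv₂] at hHz
    rw [hv₁, hv₂] at hKz
    simp only [Prod.mk.injEq]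
    have hvne : (q₁-p₁)^2+(q₂-p₂)^2 ≠ 0 := by
      rw [hvsq, hv₁, hv₂] at hvpos; exact hvpos.ne'
    refine ⟨?_, ?_⟩
    · have hs1 : (((q₁-p₁)^2+(q₂-p₂)^2)) *
          ((star z ⬝ᵥ A₁.mulVec z).re - (a*p₁+b*q₁)) = 0 := by
        linear_combination (q₁-p₁)*hHz - (q₂-p₂)*hKz -
          (((q₁-p₁)^2+(q₂-p₂)^2)*p₁)*hab
      have := (mul_eq_zero.mp hs1).resolve_left hvne
      linarith
    · have hs2 : (((q₁-p₁)^2+(q₂-p₂)^2)) *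
          ((star z ⬝ᵥ A₂.mulVec z).re - (a*p₂+b*q₂)) = 0 := by
        linear_combination (q₂-p₂)*hHz + (q₁-p₁)*hKz -
          (((q₁-p₁)^2+(q₂-p₂)^2)*p₂)*hab
      have := (mul_eq_zero.mp hs2).resolve_left hvne
      linarith
end

section
/- Let A, A₊ be real symmetric n×n matrices with A₊ ≻ 0, and v ∈ ℝⁿ. For λ < λ⁺_min(A) (the smallest generalized eigenvalue of A w.r.t. A₊), define φ(λ) = |(A − λA₊)⁻¹ v|²₊. Then φ is well-defined (A − λA₊ is invertible), continuous, and monotonically non-decreasing in λ on (−∞, λ⁺_min(A)), and strictly increasing if v ≠ 0. -/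
open Matrix

lemma aux_conj_posDef {n : ℕ} {D : Matrix (Fin n) (Fin n) ℝ} (U : Matrix (Fin n) (Fin n) ℝ)
    (hD : D.PosDef) (hU : IsUnit U.det) : (U * D * Uᴴ).PosDef := by
  refine Matrix.PosDef.of_dotProduct_mulVec_pos (Matrix.isHermitian_mul_mul_conjTranspose U hD.1) (fun x hx => ?_)
  have hy : Uᴴ *ᵥ x ≠ 0 := by
    intro h
    have hUH : IsUnit (Uᴴ).det := by simpa using hU
    have := Matrix.mulVec_injective_iff_isUnit.mpr ((Matrix.isUnit_iff_isUnit_det _).mpr hUH)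
    exact hx (by simpa using this (by simpa using h))
  have key : star x ⬝ᵥ (U * D * Uᴴ) *ᵥ x = star (Uᴴ *ᵥ x) ⬝ᵥ D *ᵥ (Uᴴ *ᵥ x) := by
    rw [← mulVec_mulVec, ← mulVec_mulVec, dotProduct_mulVec, star_mulVec,
      conjTranspose_conjTranspose]
  rw [key]
  exact hD.dotProduct_mulVec_pos hy

section
open scoped MatrixOrder

lemma aux_posDef_pencil {n : ℕ}
    (A Aplus : Matrix (Fin n) (Fin n) ℝ)
    (hA : A.IsSymm) (hAplus : Aplus.PosDef)
    (lmin : ℝ) (hlmin : IsLeast {l : ℝ | (A - l • Aplus).det = 0} lmin) :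
    ∀ l < lmin, (A - l • Aplus).PosDef := by
  have hAh : A.IsHermitian := by
    rw [Matrix.IsHermitian, conjTranspose_eq_transpose_of_trivial]; exact hA
  have hP := hAplus.posSemidef
  set S := CFC.sqrt Aplus with hSdef
  have hS : S.PosSemidef := Matrix.nonneg_iff_posSemidef.mp (CFC.sqrt_nonneg Aplus)
  have hSS : S * S = Aplus := CFC.sqrt_mul_sqrt_self Aplus (Matrix.nonneg_iff_posSemidef.mpr hP)
  have hdetS : S.det ≠ 0 := by
    intro h
    have h1 : S.det * S.det = Aplus.det := by rw [← det_mul, hSS]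
    rw [h, mul_zero] at h1
    exact hAplus.det_pos.ne h1
  have hdetS' : IsUnit S.det := isUnit_iff_ne_zero.mpr hdetS
  have hSinv : S * S⁻¹ = 1 := mul_nonsing_inv S hdetS'
  have hinvS : S⁻¹ * S = 1 := nonsing_inv_mul S hdetS'
  set B := S⁻¹ * A * S⁻¹ with hBdef
  have key : ∀ l : ℝ, A - l • Aplus = S * (B - l • 1) * S := by
    intro l
    rw [Matrix.mul_sub, Matrix.sub_mul]
    congr 1
    · rw [hBdef]
      simp only [← mul_assoc]
      rw [hSinv, one_mul, mul_assoc, hinvS, mul_one]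
    · rw [mul_smul_comm, mul_one, smul_mul_assoc, hSS]
  have hB : B.IsHermitian := by
    have hSih : (S⁻¹).IsHermitian := hS.1.inv
    show Bᴴ = B
    rw [hBdef, conjTranspose_mul, conjTranspose_mul, hSih.eq, hAh.eq, ← mul_assoc]
  set μ := hB.eigenvalues with hμdef
  set U : Matrix (Fin n) (Fin n) ℝ := (hB.eigenvectorUnitary : Matrix (Fin n) (Fin n) ℝ) with hUdef
  have hU2 : U * star U = 1 := mem_unitaryGroup_iff.mp hB.eigenvectorUnitary.2
  have hUdet : U.det * (star U).det = 1 := by rw [← det_mul, hU2, det_one]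
  have hspec : B = U * diagonal μ * star U := by
    have := hB.spectral_theorem
    rwa [RCLike.ofReal_real_eq_id, Function.id_comp] at this
  have hdiag : ∀ l : ℝ, B - l • 1 = U * diagonal (fun i => μ i - l) * star U := by
    intro l
    have h1 : (l • 1 : Matrix (Fin n) (Fin n) ℝ) = U * (l • 1) * star U := by
      rw [mul_smul_comm, mul_one, smul_mul_assoc, hU2]
    rw [hspec]
    nth_rewrite 1 [h1]
    rw [← Matrix.sub_mul, ← Matrix.mul_sub, smul_one_eq_diagonal, diagonal_sub]
  have hdetB : ∀ l : ℝ, (B - l • 1).det = ∏ i, (μ i - l) := by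
    intro l
    rw [hdiag l, det_mul, det_mul, mul_right_comm, hUdet, one_mul, det_diagonal]
  have hzero : ∀ l : ℝ, (A - l • Aplus).det = 0 ↔ (B - l • 1).det = 0 := by
    intro l
    rw [key l, det_mul, det_mul]
    constructor
    · intro h
      rcases mul_eq_zero.mp h with h | h
      · rcases mul_eq_zero.mp h with h | h
        · exact absurd h hdetS
        · exact h
      · exact absurd h hdetS
    · intro h
      rw [h, mul_zero, zero_mul]
  have heig_mem : ∀ i, μ i ∈ {l : ℝ | (A - l • Aplus).det = 0} := by
    intro i
    show (A - μ i • Aplus).det = 0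
    rw [hzero, hdetB]
    exact Finset.prod_eq_zero (Finset.mem_univ i) (sub_self _)
  intro l hl
  have hpos : ∀ i, 0 < μ i - l := fun i => sub_pos.2 (lt_of_lt_of_le hl (hlmin.2 (heig_mem i)))
  have hUdetunit : IsUnit U.det := IsUnit.of_mul_eq_one _ hUdet
  have h1 : (B - l • 1).PosDef := by
    rw [hdiag l, Matrix.star_eq_conjTranspose]
    exact aux_conj_posDef U (Matrix.PosDef.diagonal hpos) hUdetunit
  have h2 := aux_conj_posDef S h1 hdetS'
  rwa [hS.1.eq, ← key l] at h2

end

/-- For `λ` below the smallest generalized eigenvalue `λ⁺_min(A)` of `A` with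
respect to `A₊ ≻ 0`, the function `φ(λ) = |(A − λA₊)⁻¹ v|²₊` is well defined
(`A − λA₊` is invertible), continuous and monotone non-decreasing on
`(−∞, λ⁺_min(A))`, and strictly increasing there if `v ≠ 0`. -/
theorem stmt_18 (n : ℕ) (hn : 0 < n)
    (A Aplus : Matrix (Fin n) (Fin n) ℝ)
    (hA : A.IsSymm) (hAplus : Aplus.PosDef)
    (v : Fin n → ℝ)
    (lmin : ℝ) (hlmin : IsLeast {l : ℝ | (A - l • Aplus).det = 0} lmin)
    (φ : ℝ → ℝ)
    (hφ : ∀ l : ℝ, φ l =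
      (A - l • Aplus)⁻¹.mulVec v ⬝ᵥ Aplus.mulVec ((A - l • Aplus)⁻¹.mulVec v)) :
    (∀ l < lmin, IsUnit (A - l • Aplus).det)
    ∧ ContinuousOn φ (Set.Iio lmin)
    ∧ MonotoneOn φ (Set.Iio lmin)
    ∧ (v ≠ 0 → StrictMonoOn φ (Set.Iio lmin)) := by
  have pd := aux_posDef_pencil A Aplus hA hAplus lmin hlmin
  have hunit : ∀ l < lmin, IsUnit (A - l • Aplus).det := by
    intro l hl
    exact isUnit_iff_ne_zero.mpr fun h => absurd (hlmin.2 h) (not_le.2 hl)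
  have hne : ∀ l ∈ Set.Iio lmin, (A - l • Aplus).det ≠ 0 :=
    fun l hl => (hunit l hl).ne_zero
  -- continuity
  have hφeq : ∀ l : ℝ, φ l = ((A - l • Aplus).det)⁻¹ * (((A - l • Aplus).det)⁻¹ *
      (((A - l • Aplus).adjugate *ᵥ v) ⬝ᵥ Aplus *ᵥ ((A - l • Aplus).adjugate *ᵥ v))) := by
    intro l
    rw [hφ l, Matrix.inv_def, Ring.inverse_eq_inv, Matrix.smul_mulVec,
      smul_dotProduct, mulVec_smul, dotProduct_smul]
    simp [smul_eq_mul]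
  have hcont : ContinuousOn φ (Set.Iio lmin) := by
    have hM : Continuous fun l : ℝ => A - l • Aplus :=
      continuous_const.sub (continuous_id.smul continuous_const)
    have hd : Continuous fun l : ℝ => (A - l • Aplus).det := hM.matrix_det
    have hw : Continuous fun l : ℝ => (A - l • Aplus).adjugate *ᵥ v :=
      hM.matrix_adjugate.matrix_mulVec continuous_const
    have hc : Continuous fun l : ℝ =>
        ((A - l • Aplus).adjugate *ᵥ v) ⬝ᵥ Aplus *ᵥ ((A - l • Aplus).adjugate *ᵥ v) :=
      hw.dotProduct (continuous_const.matrix_mulVec hw)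
    refine ContinuousOn.congr ?_ (fun l _ => hφeq l)
    exact (hd.continuousOn.inv₀ hne).mul ((hd.continuousOn.inv₀ hne).mul hc.continuousOn)
  -- monotonicity core
  have core : ∀ l1 l2 : ℝ, l1 < lmin → l2 < lmin → l1 < l2 →
      φ l1 ≤ φ l2 ∧ (v ≠ 0 → φ l1 < φ l2) := by
    intro l1 l2 h1 h2 h12
    set M1 := A - l1 • Aplus with hM1def
    set M2 := A - l2 • Aplus with hM2def
    have hM1 : M1.PosDef := pd l1 h1
    have hM2 : M2.PosDef := pd l2 h2
    have hu1 : IsUnit M1.det := hM1.det_pos.ne'.isUnit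
    have hu2 : IsUnit M2.det := hM2.det_pos.ne'.isUnit
    set w1 := M1⁻¹ *ᵥ v with hw1def
    set w2 := M2⁻¹ *ᵥ v with hw2def
    have e1 : M1 *ᵥ w1 = v := by
      rw [hw1def, mulVec_mulVec, mul_nonsing_inv _ hu1, one_mulVec]
    have e2 : M2 *ᵥ w2 = v := by
      rw [hw2def, mulVec_mulVec, mul_nonsing_inv _ hu2, one_mulVec]
    set c := l2 - l1 with hc
    have hcpos : 0 < c := sub_pos.2 h12
    have hM12 : M1 = M2 + c • Aplus := by
      rw [hM1def, hM2def, hc]; module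
    have hM21 : M2 = M1 - c • Aplus := by
      rw [hM1def, hM2def, hc]; module
    set dvec := w2 - w1 with hdvec
    set u1 := Aplus *ᵥ w1 with hu1def
    set u2 := Aplus *ᵥ w2 with hu2def
    have hd1 : M1 *ᵥ dvec = c • u2 := by
      rw [hdvec, mulVec_sub, e1, hM12, add_mulVec, e2, smul_mulVec,
        add_sub_cancel_left, hu2def]
    have hd2 : M2 *ᵥ dvec = c • u1 := by
      rw [hdvec, mulVec_sub, e2, hM21, sub_mulVec, e1, smul_mulVec, hu1def]
      abel
    have hdd1 : dvec = c • (M1⁻¹ *ᵥ u2) := by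
      have h : M1⁻¹ *ᵥ (M1 *ᵥ dvec) = dvec := by
        rw [mulVec_mulVec, nonsing_inv_mul _ hu1, one_mulVec]
      rw [← h, hd1, mulVec_smul]
    have hdd2 : dvec = c • (M2⁻¹ *ᵥ u1) := by
      have h : M2⁻¹ *ᵥ (M2 *ᵥ dvec) = dvec := by
        rw [mulVec_mulVec, nonsing_inv_mul _ hu2, one_mulVec]
      rw [← h, hd2, mulVec_smul]
    have hsplit : φ l2 = φ l1 + (dvec ⬝ᵥ u2 + w1 ⬝ᵥ Aplus *ᵥ dvec) := by
      rw [hφ l1, hφ l2, hdvec, hu2def, sub_dotProduct, mulVec_sub, dotProduct_sub]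
      ring
    have ht1 : dvec ⬝ᵥ u2 = c * (u2 ⬝ᵥ M1⁻¹ *ᵥ u2) := by
      rw [hdd1, smul_dotProduct, smul_eq_mul, dotProduct_comm]
    have hAT : Aplusᵀ = Aplus := by
      rw [← conjTranspose_eq_transpose_of_trivial]; exact hAplus.1
    have ht2 : w1 ⬝ᵥ Aplus *ᵥ dvec = c * (u1 ⬝ᵥ M2⁻¹ *ᵥ u1) := by
      rw [hdd2, mulVec_smul, dotProduct_smul, smul_eq_mul]
      congr 1
      rw [dotProduct_mulVec w1 Aplus, ← mulVec_transpose, hAT, hu1def]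
    have q1 : 0 ≤ u2 ⬝ᵥ M1⁻¹ *ᵥ u2 := by simpa using (hM1.inv).posSemidef.dotProduct_mulVec_nonneg u2
    have q2 : 0 ≤ u1 ⬝ᵥ M2⁻¹ *ᵥ u1 := by simpa using (hM2.inv).posSemidef.dotProduct_mulVec_nonneg u1
    constructor
    · rw [hsplit, ht1, ht2]; nlinarith
    · intro hv
      have hw1 : w1 ≠ 0 := fun h => hv (by rw [← e1, h, mulVec_zero])
      have hu1ne : u1 ≠ 0 := by
        intro h
        have hpos := hAplus.dotProduct_mulVec_pos (x := w1) hw1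
        rw [← hu1def] at hpos
        simp only [star_trivial, h, dotProduct_zero] at hpos
        exact lt_irrefl 0 hpos
      have q2' : 0 < u1 ⬝ᵥ M2⁻¹ *ᵥ u1 := by simpa using (hM2.inv).dotProduct_mulVec_pos hu1ne
      rw [hsplit, ht1, ht2]; nlinarith
  refine ⟨hunit, hcont, ?_, ?_⟩
  · intro a ha b hb hab
    rcases hab.lt_or_eq with h | h
    · exact (core a b ha hb h).1
    · rw [h]
  · intro hv a ha b hb hab
    exact (core a b ha hb hab).2 hv
end

section
/- Let A, A₊ be real symmetric n×n matrices with A₊ ≻ 0, v ∈ ℝⁿ, v ≠ 0, and suppose the projection of A₊^{-1/2} v onto the eigenspace of A₊^{-1/2} A A₊^{-1/2} corresponding to its smallest eigenvalue is nonzero. Then lim_{λ → λ⁺_min(A)⁻} |(A − λA₊)⁻¹ v|²₊ = +∞. -/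
open Matrix

/-- If the projection of `v` onto the generalized eigenspace of `A` (w.r.t.
`A₊ ≻ 0`) for the smallest generalized eigenvalue `λ⁺_min(A)` is nonzero —
equivalently, there is a generalized eigenvector `w` with `A w = λ⁺_min A₊ w`
and `w ⬝ v ≠ 0` — then `|(A − λA₊)⁻¹ v|²₊ → +∞` as `λ → λ⁺_min(A)⁻`. -/
theorem stmt_19 (n : ℕ) (hn : 0 < n)
    (A Aplus : Matrix (Fin n) (Fin n) ℝ)
    (hA : A.IsSymm) (hAplus : Aplus.PosDef)
    (v : Fin n → ℝ) (hv : v ≠ 0)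
    (lmin : ℝ) (hlmin : IsLeast {l : ℝ | (A - l • Aplus).det = 0} lmin)
    (hproj : ∃ w : Fin n → ℝ, w ≠ 0 ∧
      A.mulVec w = lmin • Aplus.mulVec w ∧ w ⬝ᵥ v ≠ 0) :
    Filter.Tendsto
      (fun l : ℝ =>
        (A - l • Aplus)⁻¹.mulVec v ⬝ᵥ Aplus.mulVec ((A - l • Aplus)⁻¹.mulVec v))
      (nhdsWithin lmin (Set.Iio lmin)) Filter.atTop := by
  obtain ⟨w, hw0, hweig, hwv⟩ := hproj
  -- the square root of Aplus
  obtain ⟨S, hSS, hSsymm⟩ : ∃ S : Matrix (Fin n) (Fin n) ℝ, S * S = Aplus ∧ Sᵀ = S := by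
    open scoped MatrixOrder in
    exact ⟨CFC.sqrt Aplus, CFC.sqrt_mul_sqrt_self Aplus hAplus.posSemidef.nonneg,
      by simpa [Matrix.IsHermitian] using (CFC.sqrt_nonneg Aplus).posSemidef.isHermitian⟩
  have hAplussymm : Aplusᵀ = Aplus := by
    have := hAplus.isHermitian
    rwa [Matrix.IsHermitian, Matrix.conjTranspose_eq_transpose_of_trivial] at this
  have hwAw : 0 < w ⬝ᵥ Aplus.mulVec w := by simpa using hAplus.dotProduct_mulVec_pos hw0
  set c : ℝ := (w ⬝ᵥ v) ^ 2 / (w ⬝ᵥ Aplus.mulVec w) with hc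
  have hcpos : 0 < c := div_pos (by positivity) hwAw
  -- key pointwise lower bound
  have key : ∀ l : ℝ, l < lmin →
      c / (lmin - l) ^ 2 ≤
        (A - l • Aplus)⁻¹.mulVec v ⬝ᵥ Aplus.mulVec ((A - l • Aplus)⁻¹.mulVec v) := by
    intro l hl
    set M := A - l • Aplus with hM
    have hdet : M.det ≠ 0 := by
      intro h
      exact absurd (hlmin.2 h) (not_le.mpr hl)
    set u := M⁻¹.mulVec v with hu
    have hMu : M.mulVec u = v := by
      rw [hu, Matrix.mulVec_mulVec, Matrix.mul_nonsing_inv _ (isUnit_iff_ne_zero.mpr hdet),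
        Matrix.one_mulVec]
    have hMsymm : Mᵀ = M := by
      rw [hM, Matrix.transpose_sub, Matrix.transpose_smul, hA, hAplussymm]
    -- M w = (lmin - l) • Aplus w
    have hMw : M.mulVec w = (lmin - l) • Aplus.mulVec w := by
      rw [hM, Matrix.sub_mulVec, Matrix.smul_mulVec, hweig, sub_smul]
    -- w ⬝ v = (lmin - l) * (Aplus w ⬝ u)
    have step1 : w ⬝ᵥ v = (lmin - l) * (Aplus.mulVec w ⬝ᵥ u) := by
      calc w ⬝ᵥ v = w ⬝ᵥ M.mulVec u := by rw [hMu]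
        _ = M.vecMul w ⬝ᵥ u := (Matrix.dotProduct_mulVec _ _ _)
        _ = M.mulVec w ⬝ᵥ u := by rw [← Matrix.vecMul_transpose, hMsymm]
        _ = (lmin - l) * (Aplus.mulVec w ⬝ᵥ u) := by
            rw [hMw, smul_dotProduct, smul_eq_mul]
    -- symmetric matrices can be moved across the dot product
    have hsym : ∀ (B : Matrix (Fin n) (Fin n) ℝ), Bᵀ = B →
        ∀ x y : Fin n → ℝ, B.mulVec x ⬝ᵥ y = x ⬝ᵥ B.mulVec y := by
      intro B hB x y
      rw [Matrix.dotProduct_mulVec, ← Matrix.vecMul_transpose, hB]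
    -- rewrite via S
    have hAplusw : ∀ x y : Fin n → ℝ, x ⬝ᵥ Aplus.mulVec y = S.mulVec x ⬝ᵥ S.mulVec y := by
      intro x y
      rw [← hSS, ← Matrix.mulVec_mulVec, ← hsym S hSsymm x (S.mulVec y)]
    -- Cauchy–Schwarz
    have CS : (S.mulVec w ⬝ᵥ S.mulVec u) ^ 2 ≤
        (w ⬝ᵥ Aplus.mulVec w) * (u ⬝ᵥ Aplus.mulVec u) := by
      rw [hAplusw w w, hAplusw u u]
      have := Finset.sum_mul_sq_le_sq_mul_sq Finset.univ (S.mulVec w) (S.mulVec u)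
      simpa [dotProduct, pow_two] using this
    have hMwu : Aplus.mulVec w ⬝ᵥ u = S.mulVec w ⬝ᵥ S.mulVec u := by
      rw [hsym Aplus hAplussymm w u, hAplusw w u]
    have hpos : (0:ℝ) < (lmin - l) ^ 2 := pow_pos (sub_pos.mpr hl) 2
    have h2 : (w ⬝ᵥ v) ^ 2 ≤ (lmin - l) ^ 2 * ((w ⬝ᵥ Aplus.mulVec w) * (u ⬝ᵥ Aplus.mulVec u)) := by
      rw [step1, mul_pow, hMwu]
      exact mul_le_mul_of_nonneg_left CS (le_of_lt hpos)
    rw [hc, div_div, div_le_iff₀ (mul_pos hwAw hpos)]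
    exact h2.trans_eq (by ring)
  -- the comparison function tends to atTop
  have haux : Filter.Tendsto (fun l : ℝ => c / (lmin - l) ^ 2)
      (nhdsWithin lmin (Set.Iio lmin)) Filter.atTop := by
    have h1 : Filter.Tendsto (fun l : ℝ => (lmin - l) ^ 2)
        (nhdsWithin lmin (Set.Iio lmin)) (nhdsWithin 0 (Set.Ioi 0)) := by
      apply tendsto_nhdsWithin_of_tendsto_nhds_of_eventually_within
      · have : Filter.Tendsto (fun l : ℝ => (lmin - l) ^ 2) (nhds lmin) (nhds ((lmin - lmin)^2)) :=
          ((continuous_const.sub continuous_id).pow 2).tendsto lmin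
        simpa using this.mono_left nhdsWithin_le_nhds
      · filter_upwards [self_mem_nhdsWithin] with l hl
        have : (0:ℝ) < lmin - l := sub_pos.mpr hl
        exact Set.mem_Ioi.mpr (by positivity)
    have h2 : Filter.Tendsto (fun l : ℝ => ((lmin - l) ^ 2)⁻¹)
        (nhdsWithin lmin (Set.Iio lmin)) Filter.atTop :=
      tendsto_inv_nhdsGT_zero.comp h1
    have := Filter.Tendsto.const_mul_atTop hcpos h2
    simpa [div_eq_mul_inv] using this
  apply Filter.tendsto_atTop_mono' _ _ haux
  filter_upwards [self_mem_nhdsWithin] with l hl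
  exact key l hl
end
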